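/- Let X be a type of variables, φ a Boolean formula over X given semantically as a predicate on assignments σ : X → Bool, and I ⊆ P ⊆ X. Suppose I is an independent support of P for φ. Then I is a minimal independent support of P for φ (i.e., no proper subset of I is an independent support of P) if and only if no variable x ∈ I is implicitly defined by I \ {x} for φ. -/

import Mathlib

/-!
Dropping `x` from an independent support `I` keeps it an independent support exactly when
`x` is implicitly defined by `I \ {x}`, because independent supports compose transitively.
Conversely, any proper subset `J ⊂ I` misses some `x ∈ I ⊆ P`, and if `J` were an independent
support it would implicitly define `x`, hence so would the larger set `I \ {x}`.
-/

/-- `I` is an independent support of `P` for `φ`: any two solutions of `φ` that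
agree on `I` also agree on `P`. -/
def IndepSupport {X : Type*} (φ : (X → Bool) → Prop) (I P : Set X) : Prop :=
  ∀ σ₁ σ₂ : X → Bool, φ σ₁ → φ σ₂ → (∀ i ∈ I, σ₁ i = σ₂ i) → ∀ p ∈ P, σ₁ p = σ₂ p

/-- `x` is implicitly defined by `I` for `φ`: any two solutions of `φ` that agree
on `I` assign the same value to `x`. -/
def ImplicitlyDefined {X : Type*} (φ : (X → Bool) → Prop) (I : Set X) (x : X) : Prop :=
  ∀ σ₁ σ₂ : X → Bool, φ σ₁ → φ σ₂ → (∀ i ∈ I, σ₁ i = σ₂ i) → σ₁ x = σ₂ x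

section

variable {X : Type*} {φ : (X → Bool) → Prop} {I J P : Set X} {x : X}

theorem implicitlyDefined_of_mem (hx : x ∈ I) : ImplicitlyDefined φ I x :=
  fun _ _ _ _ hagree => hagree x hx

theorem ImplicitlyDefined.mono (hIJ : I ⊆ J) (hx : ImplicitlyDefined φ I x) :
    ImplicitlyDefined φ J x :=
  fun σ₁ σ₂ h₁ h₂ hagree => hx σ₁ σ₂ h₁ h₂ fun i hi => hagree i (hIJ hi)

theorem indepSupport_iff_forall_implicitlyDefined :
    IndepSupport φ I P ↔ ∀ p ∈ P, ImplicitlyDefined φ I p :=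
  ⟨fun h p hp σ₁ σ₂ h₁ h₂ hagree => h σ₁ σ₂ h₁ h₂ hagree p hp,
    fun h σ₁ σ₂ h₁ h₂ hagree p hp => h p hp σ₁ σ₂ h₁ h₂ hagree⟩

theorem IndepSupport.trans (hJI : IndepSupport φ J I) (hIP : IndepSupport φ I P) :
    IndepSupport φ J P :=
  fun σ₁ σ₂ h₁ h₂ hagree => hIP σ₁ σ₂ h₁ h₂ (hJI σ₁ σ₂ h₁ h₂ hagree)

theorem indepSupport_sdiff_singleton (hx : ImplicitlyDefined φ (I \ {x}) x) :
    IndepSupport φ (I \ {x}) I := by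
  refine indepSupport_iff_forall_implicitlyDefined.2 fun i hi => ?_
  by_cases hix : i = x
  · exact hix ▸ hx
  · exact implicitlyDefined_of_mem ⟨hi, hix⟩

end

/-- An independent support `I` of `P` is minimal (no proper subset of `I` is an
independent support of `P`) iff no variable `x ∈ I` is implicitly defined by
`I \ {x}`. -/
theorem minimal_indepSupport_iff {X : Type*} (φ : (X → Bool) → Prop)
    (I P : Set X) (hIP : I ⊆ P) (h : IndepSupport φ I P) :
    (∀ J : Set X, J ⊂ I → ¬ IndepSupport φ J P) ↔
      ∀ x ∈ I, ¬ ImplicitlyDefined φ (I \ {x}) x := by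
  constructor
  · intro hmin x hx hdef
    exact hmin (I \ {x}) (Set.sdiff_singleton_ssubset.2 hx)
      ((indepSupport_sdiff_singleton hdef).trans h)
  · intro hnodef J hJI hJ
    obtain ⟨x, hxI, hxJ⟩ := Set.exists_of_ssubset hJI
    have hJx : ImplicitlyDefined φ J x :=
      indepSupport_iff_forall_implicitlyDefined.1 hJ x (hIP hxI)
    exact hnodef x hxI (hJx.mono (Set.subset_sdiff_singleton hJI.subset hxJ))
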